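/- Let $Q$ be an involutory quandle, $a,b,c \in Q$ with $c \rhd a = c \rhd b$. Then for every $i \geq 0$: $c^{(ac)^i a} = c^{(ac)^i b}$ (relation $\gamma_i$). -/

import Mathlib

/-!
Self-distributivity and involutivity give `((x ▷ y) ▷ z) ▷ y = x ▷ (z ▷ y)`. With
`x = c^{(ac)^i}` and the induction hypothesis `x ▷ a = x ▷ b`, the two sides of `γ_{i+1}`
become `x ▷ (c ▷ a)` and `x ▷ (c ▷ b)`, which agree by assumption.
-/

/-- An involutory quandle: `x ▷ x = x`, `(x ▷ y) ▷ y = x`, and right self-distributivity. -/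
structure InvQuandle (Q : Type*) where
  act : Q → Q → Q
  idem : ∀ x, act x x = x
  invol : ∀ x y, act (act x y) y = x
  distrib : ∀ x y z, act (act x y) z = act (act x z) (act y z)

namespace InvQuandle

variable {Q : Type*}

/-- Apply a word (list of quandle elements) to `z` on the right:
`apw R z [y₁,…,y_k] = ((z ▷ y₁) ▷ y₂) ⋯ ▷ y_k`. -/
def apw (R : InvQuandle Q) (z : Q) (w : List Q) : Q := w.foldl R.act z

/-- The word `w` repeated `n` times. -/
def wpow (w : List Q) : ℕ → List Q
  | 0 => []
  | n + 1 => w ++ wpow w n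

end InvQuandle

open InvQuandle

namespace InvQuandle

variable {Q : Type*}

theorem wpow_succ (w : List Q) (n : ℕ) : wpow w (n + 1) = wpow w n ++ w := by
  induction n with
  | zero => simp [wpow]
  | succ n ih =>
    conv_lhs => rw [wpow, ih]
    rw [← List.append_assoc]
    rfl

variable (R : InvQuandle Q)

theorem apw_append (z : Q) (u v : List Q) : R.apw z (u ++ v) = R.apw (R.apw z u) v :=
  List.foldl_append

theorem apw_append_singleton (z : Q) (w : List Q) (y : Q) :
    R.apw z (w ++ [y]) = R.act (R.apw z w) y := by
  rw [apw_append]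
  rfl

theorem act_act_act_eq_act_act (x y z : Q) :
    R.act (R.act (R.act x y) z) y = R.act x (R.act z y) := by
  rw [R.distrib, R.invol]

end InvQuandle

/-- relation $γ_i$: if $c ▷ a = c ▷ b$ then
$c^{(ac)^i a} = c^{(ac)^i b}$ for all $i ≥ 0$. -/
theorem stmt14 {Q : Type*} (R : InvQuandle Q) (a b c : Q)
    (h : R.act c a = R.act c b) (i : ℕ) :
    R.apw c (wpow [a, c] i ++ [a]) = R.apw c (wpow [a, c] i ++ [b]) := by
  induction i with
  | zero => simpa [apw, wpow] using h
  | succ i ih =>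
    set x := R.apw c (wpow [a, c] i)
    have hx : R.act x a = R.act x b := by simpa only [apw_append_singleton] using ih
    have expand : ∀ y, R.apw c (wpow [a, c] (i + 1) ++ [y]) = R.act (R.act (R.act x a) c) y :=
      fun y => by rw [wpow_succ, apw_append_singleton, apw_append]; rfl
    calc R.apw c (wpow [a, c] (i + 1) ++ [a])
        = R.act x (R.act c a) := by rw [expand, act_act_act_eq_act_act]
      _ = R.act x (R.act c b) := by rw [h]
      _ = R.apw c (wpow [a, c] (i + 1) ++ [b]) := by rw [expand, hx, act_act_act_eq_act_act]
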